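/- Let P = P(F) be a k-local property of [n]^d-arrays over Σ, let A be an [n]^d-array over Σ that is ε-far from P, and let G ∈ G(n,d,k,w) with w ≥ k. Then at least one of the following holds: (i) there exists a (P,A)-unrepairable G-block; (ii) for at least an ε-fraction of the G-blocks B, the array A contains an F-copy lying inside B̄. -/

import Mathlib

open Finset

/-- `I[:ℓ]`: the set of the `ℓ` smallest elements of `I` (or `I` itself if `|I| < ℓ`). -/
def takeSmallest (I : Finset ℕ) (ℓ : ℕ) : Finset ℕ :=
  I.filter fun x => (I.filter fun y => y ≤ x).card ≤ ℓ

/-- `I[ℓ+1:] = I \ I[:ℓ]`. -/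
def dropSmallest (I : Finset ℕ) (ℓ : ℕ) : Finset ℕ :=
  I \ takeSmallest I ℓ

/-- An `(n,w)`-interval partition: a partition of `[n] = {1,…,n}` into consecutive,
pairwise disjoint intervals `I_1, …, I_t`, each of size `w` or `w+1`, where for `j < j'`
every element of `I j` is smaller than every element of `I j'`. -/
structure IntervalPartition (n w : ℕ) where
  t : ℕ
  I : Fin t → Finset ℕ
  interval : ∀ j, ∃ a b, 1 ≤ a ∧ a ≤ b ∧ b ≤ n ∧ I j = Finset.Icc a b
  size : ∀ j, (I j).card = w ∨ (I j).card = w + 1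
  cover : ∀ x ∈ Finset.Icc 1 n, ∃ j, x ∈ I j
  ordered : ∀ j j' : Fin t, j < j' → ∀ x ∈ I j, ∀ y ∈ I j', x < y

/-- The hypergrid `[n]^d`, as a set of tuples. -/
def cube (n d : ℕ) : Set (Fin d → ℕ) :=
  {x | ∀ i, 1 ≤ x i ∧ x i ≤ n}

/-- The `(n,d,k,w)`-grid induced by an `(n,w)`-interval partition. -/
def gridOf (n d k w : ℕ) (P : IntervalPartition n w) : Set (Fin d → ℕ) :=
  {x ∈ cube n d | ∃ i : Fin d, ∃ j : Fin P.t, x i ∈ takeSmallest (P.I j) (k - 1)}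

/-- `G ∈ 𝒢(n,d,k,w)`: `G` is the grid induced by some `(n,w)`-interval partition. -/
def IsGrid (n d k w : ℕ) (G : Set (Fin d → ℕ)) : Prop :=
  ∃ P : IntervalPartition n w, G = gridOf n d k w P

/-- Two entries of `[n]^d` are neighbors if `∑ i, |x i − y i| = 1`. -/
def Neighbor {d : ℕ} (x y : Fin d → ℕ) : Prop :=
  (∑ i, Nat.dist (x i) (y i)) = 1

/-- A `G`-block: a connected component of the neighborhood graph on `[n]^d \ G`. -/
def IsBlock (n d : ℕ) (G B : Set (Fin d → ℕ)) : Prop :=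
  B.Nonempty ∧ B ⊆ cube n d \ G ∧
    (∀ x ∈ B, ∀ y ∈ B,
      Relation.ReflTransGen
        (fun a b => a ∈ cube n d \ G ∧ b ∈ cube n d \ G ∧ Neighbor a b) x y) ∧
    (∀ x ∈ B, ∀ y, y ∈ cube n d \ G → Neighbor x y → y ∈ B)

/-- The closure `B̄` of a block `B`. -/
def blockClosure (n d k : ℕ) (B : Set (Fin d → ℕ)) : Set (Fin d → ℕ) :=
  {x ∈ cube n d | ∃ y ∈ B, ∀ i, Nat.dist (x i) (y i) < k}

/-- The boundary `∂B = B̄ \ B` of a block `B`. -/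
def blockBoundary (n d k : ℕ) (B : Set (Fin d → ℕ)) : Set (Fin d → ℕ) :=
  blockClosure n d k B \ B

/-- A valid location of a width-`k` subarray in `[n]^d`: an element of `[n−k+1]^d`. -/
def ValidLoc (n d k : ℕ) (a : Fin d → ℕ) : Prop :=
  ∀ i, 1 ≤ a i ∧ a i ≤ n - k + 1

/-- The width-`k` box with lowest corner `a`: `{a_1,…,a_1+k−1} × ⋯ × {a_d,…,a_d+k−1}`. -/
def kbox (d k : ℕ) (a : Fin d → ℕ) : Set (Fin d → ℕ) :=
  {x | ∀ i, a i ≤ x i ∧ x i ≤ a i + k - 1}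

/-- Some forbidden pattern of `F` occurs as a consecutive subarray of `A` at location `a`;
patterns are compared on `[k]^d`. -/
def HasCopyAt {σ : Type*} (d k : ℕ) (F : Set ((Fin d → ℕ) → σ))
    (A : (Fin d → ℕ) → σ) (a : Fin d → ℕ) : Prop :=
  ∃ S ∈ F, ∀ j : Fin d → ℕ, (∀ i, 1 ≤ j i ∧ j i ≤ k) →
    A (fun i => a i + j i - 1) = S j

/-- `A` contains an `F`-copy lying inside the set `X`. -/
def HasCopyIn {σ : Type*} (n d k : ℕ) (F : Set ((Fin d → ℕ) → σ))
    (A : (Fin d → ℕ) → σ) (X : Set (Fin d → ℕ)) : Prop :=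
  ∃ a, ValidLoc n d k a ∧ HasCopyAt d k F A a ∧ kbox d k a ⊆ X

/-- `A` satisfies the `k`-local property `P(F)`: it contains no `F`-copy. -/
def SatisfiesP {σ : Type*} (n d k : ℕ) (F : Set ((Fin d → ℕ) → σ))
    (A : (Fin d → ℕ) → σ) : Prop :=
  ¬ ∃ a, ValidLoc n d k a ∧ HasCopyAt d k F A a

/-- `A` is `ε`-far from `P(F)`: every array satisfying `P(F)` differs from `A`
in at least `ε·n^d` entries of `[n]^d`. -/
def FarFrom {σ : Type*} (n d k : ℕ) (F : Set ((Fin d → ℕ) → σ)) (ε : ℝ)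
    (A : (Fin d → ℕ) → σ) : Prop :=
  ∀ A' : (Fin d → ℕ) → σ, SatisfiesP n d k F A' →
    ε * (n : ℝ) ^ d ≤ ({x | x ∈ cube n d ∧ A x ≠ A' x}).ncard

/-- A block `B` is `(P,A)`-unrepairable: every array agreeing with `A` on `∂B`
(including `A` itself) contains an `F`-copy lying inside `B̄`. -/
def Unrepairable {σ : Type*} (n d k : ℕ) (F : Set ((Fin d → ℕ) → σ))
    (A : (Fin d → ℕ) → σ) (B : Set (Fin d → ℕ)) : Prop :=
  ∀ A' : (Fin d → ℕ) → σ, (∀ x ∈ blockBoundary n d k B, A' x = A x) →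
    HasCopyIn n d k F A' (blockClosure n d k B)

/-! If no block is unrepairable, repair each block whose closure contains an `F`-copy while
keeping its boundary, and glue the repairs. The blocks are the boxes `∏ᵢ I_{J i}[k:]`; they are
pairwise at distance at least `k` and the grid strips between them are only `k - 1` wide, so every
width-`k` window lies in the closure of one block and meets no other. Hence the glued array has no
copy. It differs from `A` only on the repaired blocks, each with at most `(w + 2 - k)^d` entries,
and there are `t^d ≤ (n / (w + 2 - k))^d` blocks, so `ε`-farness forces `ε · t^d` repaired
blocks. -/

theorem mem_takeSmallest_Icc {a b ℓ x : ℕ} :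
    x ∈ takeSmallest (Icc a b) ℓ ↔ a ≤ x ∧ x ≤ b ∧ x < a + ℓ := by
  have hcard : a ≤ x → x ≤ b → ((Icc a b).filter (· ≤ x)).card = x + 1 - a := fun _ _ => by
    rw [show (Icc a b).filter (· ≤ x) = Icc a x by ext; simp only [mem_filter, mem_Icc]; omega,
      Nat.card_Icc]
  simp only [takeSmallest, mem_filter, mem_Icc]
  constructor
  · rintro ⟨⟨h1, h2⟩, h3⟩
    rw [hcard h1 h2] at h3
    omega
  · rintro ⟨h1, h2, h3⟩
    rw [hcard h1 h2]
    omega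

section Neighbor

variable {d : ℕ}

theorem Neighbor.dist_le_one {x y : Fin d → ℕ} (h : Neighbor x y) (i : Fin d) :
    Nat.dist (x i) (y i) ≤ 1 :=
  h ▸ single_le_sum (f := fun i => Nat.dist (x i) (y i)) (fun _ _ => Nat.zero_le _) (mem_univ i)

theorem neighbor_update {x : Fin d → ℕ} {i : Fin d} {z : ℕ} (h : Nat.dist (x i) z = 1) :
    Neighbor x (Function.update x i z) := by
  unfold Neighbor
  rw [sum_eq_single i (fun j _ hj => by rw [Function.update_of_ne hj, Nat.dist_self])
    (absurd (mem_univ i)), Function.update_self, h]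

theorem exists_neighbor_dist_lt {l u x y : Fin d → ℕ} (hx : x ∈ Set.Icc l u)
    (hy : y ∈ Set.Icc l u) (hxy : x ≠ y) :
    ∃ x' ∈ Set.Icc l u, Neighbor x x' ∧
      ∑ i, Nat.dist (x' i) (y i) < ∑ i, Nat.dist (x i) (y i) := by
  obtain ⟨i, hi⟩ := Function.ne_iff.mp hxy
  set z := if x i < y i then x i + 1 else x i - 1
  have hz : l i ≤ z ∧ z ≤ u i ∧ Nat.dist (x i) z = 1 ∧
      Nat.dist z (y i) < Nat.dist (x i) (y i) := by
    have : l i ≤ x i := hx.1 i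
    have : x i ≤ u i := hx.2 i
    have : l i ≤ y i := hy.1 i
    have : y i ≤ u i := hy.2 i
    unfold Nat.dist z; split_ifs <;> omega
  refine ⟨Function.update x i z, ⟨fun j => ?_, fun j => ?_⟩, neighbor_update hz.2.2.1, ?_⟩
  · rcases eq_or_ne j i with rfl | hj
    · simpa using hz.1
    · simpa [hj] using hx.1 j
  · rcases eq_or_ne j i with rfl | hj
    · simpa using hz.2.1
    · simpa [hj] using hx.2 j
  · refine sum_lt_sum (fun j _ => ?_) ⟨i, mem_univ i, by simpa using hz.2.2.2⟩
    rcases eq_or_ne j i with rfl | hj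
    · simpa using hz.2.2.2.le
    · simp [hj]

theorem reflTransGen_neighbor_of_mem_Icc {l u x y : Fin d → ℕ} (hx : x ∈ Set.Icc l u)
    (hy : y ∈ Set.Icc l u) :
    Relation.ReflTransGen (fun a b => a ∈ Set.Icc l u ∧ b ∈ Set.Icc l u ∧ Neighbor a b) x y := by
  induction hm : ∑ i, Nat.dist (x i) (y i) using Nat.strong_induction_on generalizing x with
  | _ m ih =>
    by_cases hxy : x = y
    · rw [hxy]
    obtain ⟨x', hx', hnb, hlt⟩ := exists_neighbor_dist_lt hx hy hxy
    exact .head ⟨hx, hx', hnb⟩ (ih _ (hm ▸ hlt) hx' rfl)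

end Neighbor

theorem isBlock_iff_of_partition {n d : ℕ} {G : Set (Fin d → ℕ)} {ι : Type*}
    {S : ι → Set (Fin d → ℕ)} (hne : ∀ J, (S J).Nonempty) (hsub : ∀ J, S J ⊆ cube n d \ G)
    (hcover : ∀ x ∈ cube n d \ G, ∃ J, x ∈ S J)
    (hconn : ∀ J, ∀ x ∈ S J, ∀ y ∈ S J, Relation.ReflTransGen
      (fun a b => a ∈ cube n d \ G ∧ b ∈ cube n d \ G ∧ Neighbor a b) x y)
    (hclosed : ∀ J, ∀ x ∈ S J, ∀ y ∈ cube n d \ G, Neighbor x y → y ∈ S J)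
    {B : Set (Fin d → ℕ)} :
    IsBlock n d G B ↔ ∃ J, B = S J := by
  have reach : ∀ T : Set (Fin d → ℕ), (∀ x ∈ T, ∀ y ∈ cube n d \ G, Neighbor x y → y ∈ T) →
      ∀ x ∈ T, ∀ y, Relation.ReflTransGen
        (fun a b => a ∈ cube n d \ G ∧ b ∈ cube n d \ G ∧ Neighbor a b) x y → y ∈ T := by
    intro T hT x hx y hxy
    induction hxy with
    | refl => exact hx
    | tail _ hab ih => exact hT _ ih _ hab.2.1 hab.2.2
  constructor
  · rintro ⟨⟨x₀, hx₀⟩, hBsub, hBconn, hBclosed⟩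
    obtain ⟨J, hx₀J⟩ := hcover x₀ (hBsub hx₀)
    refine ⟨J, Set.Subset.antisymm (fun y hy => ?_) (fun y hy => ?_)⟩
    · exact reach (S J) (hclosed J) x₀ hx₀J y (hBconn x₀ hx₀ y hy)
    · exact reach B hBclosed x₀ hx₀ y (hconn J x₀ hx₀J y hy)
  · rintro ⟨J, rfl⟩
    exact ⟨hne J, hsub J, hconn J, hclosed J⟩

section Glue

variable {α ι σ : Type*} {S : ι → Set α} {R : ι → α → σ} {A : α → σ}

open Classical in
noncomputable def glue (S : ι → Set α) (R : ι → α → σ) (A : α → σ) (x : α) : σ :=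
  if h : ∃ J, x ∈ S J then R h.choose x else A x

theorem glue_of_mem (hS : Pairwise (Function.onFun Disjoint S)) {J : ι} {x : α} (hx : x ∈ S J) :
    glue S R A x = R J x := by
  have h : ∃ J, x ∈ S J := ⟨J, hx⟩
  rw [glue, dif_pos h, hS.eq (Set.not_disjoint_iff.2 ⟨x, h.choose_spec, hx⟩)]

theorem glue_of_forall_notMem {x : α} (hx : ∀ J, x ∉ S J) : glue S R A x = A x :=
  dif_neg fun ⟨J, hJ⟩ => hx J hJ

theorem ncard_ne_glue_le {s : Set ι} (hs : s.Finite) (hRA : ∀ J ∉ s, R J = A)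
    (hfin : ∀ J, (S J).Finite) {N : ℕ} (hN : ∀ J, (S J).ncard ≤ N) (T : Set α) :
    {x | x ∈ T ∧ A x ≠ glue S R A x}.ncard ≤ s.ncard * N := by
  have hsub : {x | x ∈ T ∧ A x ≠ glue S R A x} ⊆ ⋃ J ∈ hs.toFinset, S J := by
    rintro x ⟨-, hx⟩
    by_cases h : ∃ J, x ∈ S J
    · rw [glue, dif_pos h] at hx
      refine Set.mem_biUnion (hs.mem_toFinset.2 ?_) h.choose_spec
      by_contra hJ
      exact hx (by rw [hRA _ hJ])
    · exact absurd (glue_of_forall_notMem (not_exists.1 h)).symm hx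
  calc {x | x ∈ T ∧ A x ≠ glue S R A x}.ncard ≤ (⋃ J ∈ hs.toFinset, S J).ncard :=
        Set.ncard_le_ncard hsub (hs.toFinset.finite_toSet.biUnion fun J _ => hfin J)
    _ ≤ ∑ J ∈ hs.toFinset, (S J).ncard := hs.toFinset.set_ncard_biUnion_le S
    _ ≤ hs.toFinset.card * N := by simpa using sum_le_card_nsmul _ _ _ fun J _ => hN J
    _ = s.ncard * N := by rw [Set.ncard_eq_toFinset_card s hs]

end Glue

theorem HasCopyAt.congr {σ : Type*} {d k : ℕ} {F : Set ((Fin d → ℕ) → σ)} {A B : (Fin d → ℕ) → σ}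
    {a : Fin d → ℕ} (h : HasCopyAt d k F A a) (hAB : Set.EqOn A B (kbox d k a)) :
    HasCopyAt d k F B a := by
  obtain ⟨T, hT, hA⟩ := h
  refine ⟨T, hT, fun j hj => (hAB fun i => ?_).symm.trans (hA j hj)⟩
  have := hj i
  exact ⟨by omega, by omega⟩

/-- On a window the glued array is the repair of the piece whose closure contains the window,
since the window's points outside that piece lie on its boundary. -/
theorem satisfiesP_glue {ι σ : Type*} {n d k : ℕ} {F : Set ((Fin d → ℕ) → σ)} {A : (Fin d → ℕ) → σ}
    {S : ι → Set (Fin d → ℕ)} {R : ι → (Fin d → ℕ) → σ} (hS : Pairwise (Function.onFun Disjoint S))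
    (hbox : ∀ a, ValidLoc n d k a → ∃ J, kbox d k a ⊆ blockClosure n d k (S J) ∧
      ∀ x ∈ kbox d k a, ∀ J', x ∈ S J' → J' = J)
    (hRA : ∀ J, ∀ x ∈ blockBoundary n d k (S J), R J x = A x)
    (hR : ∀ J, ¬ HasCopyIn n d k F (R J) (blockClosure n d k (S J))) :
    SatisfiesP n d k F (glue S R A) := by
  rintro ⟨a, ha, hcopy⟩
  obtain ⟨J, hcl, honly⟩ := hbox a ha
  refine hR J ⟨a, ha, hcopy.congr fun x hx => ?_, hcl⟩
  by_cases hxJ : x ∈ S J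
  · exact glue_of_mem hS hxJ
  · rw [glue_of_forall_notMem fun J' hx' => hxJ (honly x hx J' hx' ▸ hx'), hRA J x ⟨hcl hx, hxJ⟩]

namespace IntervalPartition

variable {n w : ℕ} (P : IntervalPartition n w)

noncomputable def lo (j : Fin P.t) : ℕ := (P.interval j).choose

noncomputable def hi (j : Fin P.t) : ℕ := (P.interval j).choose_spec.choose

theorem one_le_lo (j : Fin P.t) : 1 ≤ P.lo j := (P.interval j).choose_spec.choose_spec.1

theorem lo_le_hi (j : Fin P.t) : P.lo j ≤ P.hi j := (P.interval j).choose_spec.choose_spec.2.1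

theorem hi_le (j : Fin P.t) : P.hi j ≤ n := (P.interval j).choose_spec.choose_spec.2.2.1

theorem I_eq_Icc (j : Fin P.t) : P.I j = Icc (P.lo j) (P.hi j) :=
  (P.interval j).choose_spec.choose_spec.2.2.2

theorem lo_add_le_hi (j : Fin P.t) : P.lo j + w ≤ P.hi j + 1 := by
  have := P.size j
  have := P.lo_le_hi j
  rw [P.I_eq_Icc, Nat.card_Icc] at *
  omega

theorem hi_le_lo_add (j : Fin P.t) : P.hi j ≤ P.lo j + w := by
  have := P.size j
  rw [P.I_eq_Icc, Nat.card_Icc] at this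
  omega

theorem hi_lt_lo {j j' : Fin P.t} (h : j < j') : P.hi j < P.lo j' :=
  P.ordered j j' h _ (by simp [P.I_eq_Icc, P.lo_le_hi]) _ (by simp [P.I_eq_Icc, P.lo_le_hi])

theorem exists_lo_le_le_hi {x : ℕ} (h1 : 1 ≤ x) (h2 : x ≤ n) :
    ∃ j, P.lo j ≤ x ∧ x ≤ P.hi j := by
  obtain ⟨j, hj⟩ := P.cover x (mem_Icc.2 ⟨h1, h2⟩)
  exact ⟨j, by simpa [P.I_eq_Icc] using hj⟩

theorem eq_of_lo_le_le_hi {j j' : Fin P.t} {x : ℕ} (h : P.lo j ≤ x ∧ x ≤ P.hi j)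
    (h' : P.lo j' ≤ x ∧ x ≤ P.hi j') : j = j' := by
  rcases lt_trichotomy j j' with hlt | rfl | hlt
  · have := P.hi_lt_lo hlt; omega
  · rfl
  · have := P.hi_lt_lo hlt; omega

theorem t_mul_le : P.t * w ≤ n := by
  have hdisj : (Set.univ : Set (Fin P.t)).PairwiseDisjoint P.I := fun j _ j' _ hne =>
    disjoint_left.2 fun x hx hx' => hne <|
      P.eq_of_lo_le_le_hi (by simpa [P.I_eq_Icc] using hx) (by simpa [P.I_eq_Icc] using hx')
  calc P.t * w = ∑ _j : Fin P.t, w := by simp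
    _ ≤ ∑ j, (P.I j).card := sum_le_sum fun j _ => by rcases P.size j with h | h <;> omega
    _ = (univ.biUnion P.I).card := (card_biUnion (by simpa using hdisj)).symm
    _ ≤ (Icc 1 n).card := card_le_card fun x hx => by
        obtain ⟨j, -, hj⟩ := mem_biUnion.1 hx
        rw [P.I_eq_Icc, mem_Icc] at hj
        have := P.one_le_lo j
        have := P.hi_le j
        exact mem_Icc.2 ⟨by omega, by omega⟩
    _ = n := by simp

variable {d k : ℕ}

def block (k : ℕ) (J : Fin d → Fin P.t) : Set (Fin d → ℕ) :=
  Set.Icc (fun i => P.lo (J i) + (k - 1)) (fun i => P.hi (J i))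

theorem mem_block {J : Fin d → Fin P.t} {x : Fin d → ℕ} :
    x ∈ P.block k J ↔ ∀ i, P.lo (J i) + (k - 1) ≤ x i ∧ x i ≤ P.hi (J i) := by
  simp only [block, Set.mem_Icc, Pi.le_def, forall_and]

theorem block_nonempty (hkw : k ≤ w) (J : Fin d → Fin P.t) : (P.block k J).Nonempty :=
  ⟨_, Set.left_mem_Icc.2 fun i => by
    dsimp only
    have := P.lo_add_le_hi (J i)
    have := P.lo_le_hi (J i)
    omega⟩

theorem finite_block (J : Fin d → Fin P.t) : (P.block k J).Finite := Set.finite_Icc _ _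

theorem ncard_block_le (J : Fin d → Fin P.t) : (P.block k J).ncard ≤ (w + 2 - k) ^ d := by
  rw [block, ← coe_Icc, Set.ncard_coe_finset, Pi.card_Icc]
  calc ∏ i, (Icc (P.lo (J i) + (k - 1)) (P.hi (J i))).card ≤ ∏ _i : Fin d, (w + 2 - k) :=
        prod_le_prod' fun i _ => by rw [Nat.card_Icc]; have := P.hi_le_lo_add (J i); omega
    _ = (w + 2 - k) ^ d := by simp

theorem eq_of_mem_block_of_dist_lt {J J' : Fin d → Fin P.t} {x y : Fin d → ℕ}
    (hx : x ∈ P.block k J) (hy : y ∈ P.block k J') (hxy : ∀ i, Nat.dist (x i) (y i) < k) :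
    J = J' := by
  funext i
  have hxi := P.mem_block.1 hx i
  have hyi := P.mem_block.1 hy i
  have hdist := hxy i
  unfold Nat.dist at hdist
  rcases lt_trichotomy (J i) (J' i) with hlt | heq | hlt
  · have := P.hi_lt_lo hlt; omega
  · exact heq
  · have := P.hi_lt_lo hlt; omega

theorem pairwise_disjoint_block (hk : 1 ≤ k) :
    Pairwise (Function.onFun Disjoint (P.block (d := d) k)) :=
  fun _ _ hne => Set.disjoint_left.2 fun _ hx hx' =>
    hne (P.eq_of_mem_block_of_dist_lt hx hx' fun i => by rw [Nat.dist_self]; omega)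

theorem block_injective (hk : 1 ≤ k) (hkw : k ≤ w) :
    Function.Injective (P.block (d := d) k) := fun J J' h => by
  obtain ⟨x, hx⟩ := P.block_nonempty hkw J
  exact (P.pairwise_disjoint_block hk).eq
    (Set.not_disjoint_iff.2 ⟨x, hx, h ▸ hx⟩)

theorem mem_compl_gridOf_iff {x : Fin d → ℕ} :
    x ∈ cube n d \ gridOf n d k w P ↔ ∃ J, x ∈ P.block k J := by
  simp only [gridOf, Set.mem_sdiff, Set.mem_ofPred_eq, P.I_eq_Icc, mem_takeSmallest_Icc,
    P.mem_block]
  constructor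
  · rintro ⟨hx, hnot⟩
    choose J hJ using fun i => P.exists_lo_le_le_hi (hx i).1 (hx i).2
    refine ⟨J, fun i => ⟨?_, (hJ i).2⟩⟩
    by_contra hlt
    exact hnot ⟨hx, i, J i, (hJ i).1, (hJ i).2, by omega⟩
  · rintro ⟨J, hJ⟩
    refine ⟨fun i => ⟨?_, ?_⟩, fun ⟨_, i, j, h1, h2, h3⟩ => ?_⟩
    · have := P.one_le_lo (J i); have := hJ i; omega
    · have := P.hi_le (J i); have := hJ i; omega
    · have := P.eq_of_lo_le_le_hi ⟨h1, h2⟩ (j' := J i) (by have := hJ i; omega)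
      subst this
      have := hJ i
      omega

theorem mem_block_of_neighbor (hk : 2 ≤ k) {J : Fin d → Fin P.t} {x y : Fin d → ℕ}
    (hx : x ∈ P.block k J) (hy : y ∈ cube n d \ gridOf n d k w P) (hxy : Neighbor x y) :
    y ∈ P.block k J := by
  obtain ⟨J', hy'⟩ := P.mem_compl_gridOf_iff.1 hy
  rwa [P.eq_of_mem_block_of_dist_lt hx hy' fun i => (hxy.dist_le_one i).trans_lt hk]

theorem isBlock_gridOf_iff (hk : 2 ≤ k) (hkw : k ≤ w) {B : Set (Fin d → ℕ)} :
    IsBlock n d (gridOf n d k w P) B ↔ ∃ J, B = P.block k J := by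
  have hsub : ∀ J, P.block k J ⊆ cube n d \ gridOf n d k w P := fun J _ hx =>
    P.mem_compl_gridOf_iff.2 ⟨J, hx⟩
  refine isBlock_iff_of_partition (P.block_nonempty hkw) hsub
    (fun _ hx => P.mem_compl_gridOf_iff.1 hx) (fun J x hx y hy => ?_)
    (fun _ _ hx _ hy hxy => P.mem_block_of_neighbor hk hx hy hxy)
  exact Relation.ReflTransGen.mono (fun _ _ h => ⟨hsub J h.1, hsub J h.2.1, h.2.2⟩) _ _
    (reflTransGen_neighbor_of_mem_Icc hx hy)

/-- If the window `[m, m + k)` ends among the first `k - 1` elements of `I_j`, it contains the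
last element of the preceding part. -/
theorem exists_mem_core_of_window (hk : 1 ≤ k) (hkw : k ≤ w) {m : ℕ} (hm : 1 ≤ m)
    (hmk : m + k ≤ n + 1) :
    ∃ j, ∃ v, m ≤ v ∧ v < m + k ∧ P.lo j + (k - 1) ≤ v ∧ v ≤ P.hi j := by
  obtain ⟨j, hj⟩ : ∃ j, P.lo j ≤ m + k - 1 ∧ m + k - 1 ≤ P.hi j :=
    P.exists_lo_le_le_hi (by omega) (by omega)
  by_cases hlo : P.lo j ≤ m
  · exact ⟨j, m + k - 1, by omega, by omega, by omega, hj.2⟩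
  obtain ⟨j', hj'⟩ := P.exists_lo_le_le_hi (x := P.lo j - 1) (by omega)
    (by have := P.lo_le_hi j; have := P.hi_le j; omega)
  have hj'j : j' < j := by
    rcases lt_trichotomy j' j with hlt | rfl | hlt
    · exact hlt
    · omega
    · have := P.hi_lt_lo hlt; have := P.lo_le_hi j; omega
  have := P.hi_lt_lo hj'j
  have := P.lo_add_le_hi j'
  exact ⟨j', P.lo j - 1, by omega, by omega, by omega, hj'.2⟩

theorem exists_kbox_subset_blockClosure (hk : 1 ≤ k) (hkw : k ≤ w) (hkn : k ≤ n)
    {a : Fin d → ℕ} (ha : ValidLoc n d k a) :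
    ∃ J, kbox d k a ⊆ blockClosure n d k (P.block k J) ∧
      ∀ x ∈ kbox d k a, ∀ J', x ∈ P.block k J' → J' = J := by
  choose J v hv using fun i => P.exists_mem_core_of_window hk hkw (ha i).1 (by have := ha i; omega)
  have hvJ : v ∈ P.block k J := P.mem_block.2 fun i => ⟨(hv i).2.2.1, (hv i).2.2.2⟩
  have hclose : ∀ x ∈ kbox d k a, ∀ i, Nat.dist (x i) (v i) < k := fun x hx i => by
    have := hx i; have := hv i; unfold Nat.dist; omega
  refine ⟨J, fun x hx => ⟨fun i => ?_, v, hvJ, hclose x hx⟩,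
    fun x hx J' hx' => P.eq_of_mem_block_of_dist_lt hx' hvJ (hclose x hx)⟩
  have := hx i; have := ha i; have := (hv i).1
  omega

theorem ncard_setOf_isBlock (hk : 2 ≤ k) (hkw : k ≤ w) :
    {B | IsBlock n d (gridOf n d k w P) B}.ncard = P.t ^ d := by
  have : {B | IsBlock n d (gridOf n d k w P) B} = Set.range (P.block k) := by
    ext B
    simp only [Set.mem_ofPred_eq, P.isBlock_gridOf_iff hk hkw, Set.mem_range, eq_comm]
  rw [this, Set.ncard_range_of_injective (P.block_injective (by omega) hkw)]
  simp

theorem ncard_setOf_isBlock_and (hk : 2 ≤ k) (hkw : k ≤ w) (p : Set (Fin d → ℕ) → Prop) :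
    {B | IsBlock n d (gridOf n d k w P) B ∧ p B}.ncard = {J | p (P.block k J)}.ncard := by
  have : {B | IsBlock n d (gridOf n d k w P) B ∧ p B} = P.block k '' {J | p (P.block k J)} := by
    ext B
    simp only [Set.mem_ofPred_eq, P.isBlock_gridOf_iff hk hkw, Set.mem_image]
    constructor
    · rintro ⟨⟨J, rfl⟩, hp⟩
      exact ⟨J, hp, rfl⟩
    · rintro ⟨J, hp, rfl⟩
      exact ⟨⟨J, rfl⟩, hp⟩
  rw [this, Set.ncard_image_of_injective _ (P.block_injective (by omega) hkw)]

end IntervalPartition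

theorem mul_pow_le_of_le_mul_pow {ε : ℝ} {d t s n b : ℕ} (hε : 0 ≤ ε) (hs : 0 < s)
    (hts : t * s ≤ n) (h : ε * n ^ d ≤ b * s ^ d) : ε * t ^ d ≤ b := by
  refine le_of_mul_le_mul_right ?_ (by positivity : (0 : ℝ) < (s : ℝ) ^ d)
  calc ε * t ^ d * s ^ d = ε * ((t * s : ℕ) : ℝ) ^ d := by push_cast; ring
    _ ≤ ε * n ^ d := by gcongr
    _ ≤ b * s ^ d := h

theorem far_implies_unrepairable_or_many_bad_blocks_general (n d k w : ℕ)
    (hk : 2 ≤ k) (hkw : k ≤ w) (hwn : w ≤ n) {σ : Type*}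
    (F : Set ((Fin d → ℕ) → σ)) (ε : ℝ) (hε : 0 < ε)
    (A : (Fin d → ℕ) → σ) (hA : FarFrom n d k F ε A)
    (G : Set (Fin d → ℕ)) (hG : IsGrid n d k w G) :
    (∃ B, IsBlock n d G B ∧ Unrepairable n d k F A B) ∨
      ε * ({B : Set (Fin d → ℕ) | IsBlock n d G B}.ncard : ℝ) ≤
        (({B : Set (Fin d → ℕ) |
            IsBlock n d G B ∧ HasCopyIn n d k F A (blockClosure n d k B)}).ncard : ℝ) := by
  obtain ⟨P, rfl⟩ := hG
  refine or_iff_not_imp_left.2 fun hrep => ?_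
  set bad := {J | HasCopyIn n d k F A (blockClosure n d k (P.block k J))}
  have hrepair : ∀ J, ∃ R : (Fin d → ℕ) → σ,
      (∀ x ∈ blockBoundary n d k (P.block k J), R x = A x) ∧
      ¬ HasCopyIn n d k F R (blockClosure n d k (P.block k J)) ∧ (J ∉ bad → R = A) := by
    intro J
    by_cases hJ : J ∈ bad
    · have hJrep : ¬ Unrepairable n d k F A (P.block k J) :=
        fun h => hrep ⟨_, (P.isBlock_gridOf_iff hk hkw).2 ⟨J, rfl⟩, h⟩
      simp only [Unrepairable, not_forall, exists_prop] at hJrep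
      obtain ⟨R, hRA, hR⟩ := hJrep
      exact ⟨R, hRA, hR, absurd hJ⟩
    · exact ⟨A, fun _ _ => rfl, hJ, fun _ => rfl⟩
  choose R hRA hR hRbad using hrepair
  have hsat := satisfiesP_glue (P.pairwise_disjoint_block (by omega))
    (fun _ ha => P.exists_kbox_subset_blockClosure (by omega) hkw (hkw.trans hwn) ha) hRA hR
  have hcount := ncard_ne_glue_le (S := P.block k) (Set.toFinite bad) hRbad P.finite_block
    P.ncard_block_le (cube n d)
  rw [P.ncard_setOf_isBlock hk hkw, P.ncard_setOf_isBlock_and hk hkw, Nat.cast_pow]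
  exact mul_pow_le_of_le_mul_pow (s := w + 2 - k) hε.le (by omega)
    ((Nat.mul_le_mul_left _ (by omega)).trans P.t_mul_le)
    ((hA _ hsat).trans (by exact_mod_cast hcount))

/-- If `A` is `ε`-far from the `k`-local property `P(F)` and
`G ∈ 𝒢(n,d,k,w)` with `w ≥ k`, then either some `G`-block is `(P,A)`-unrepairable, or at
least an `ε`-fraction of the `G`-blocks `B` are such that `A` contains an `F`-copy
inside `B̄`. -/
theorem far_implies_unrepairable_or_many_bad_blocks (n d k w : ℕ) (hd : 1 ≤ d)
    (hk : 2 ≤ k) (hkw : k ≤ w) (hwn : w ≤ n) {σ : Type*}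
    (F : Set ((Fin d → ℕ) → σ)) (ε : ℝ) (hε : 0 < ε)
    (A : (Fin d → ℕ) → σ) (hA : FarFrom n d k F ε A)
    (G : Set (Fin d → ℕ)) (hG : IsGrid n d k w G) :
    (∃ B, IsBlock n d G B ∧ Unrepairable n d k F A B) ∨
      ε * ({B : Set (Fin d → ℕ) | IsBlock n d G B}.ncard : ℝ) ≤
        (({B : Set (Fin d → ℕ) |
            IsBlock n d G B ∧ HasCopyIn n d k F A (blockClosure n d k B)}).ncard : ℝ) :=
  far_implies_unrepairable_or_many_bad_blocks_general n d k w hk hkw hwn F ε hε A hA G hG
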